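/- Let B : ℕ → ℝ be any sequence. For all integers k, m ≥ 1, one has [2]_q · Σ_{l=0}^{m} C(m,l)·(−1)^{m−l}·B_{l+k} = Σ_{j=0}^{max(k,m)} [q·C(k,j) + (−1)^j·C(m,j)] · Σ_{l=0}^{k+m-j} C(k+m−j,l)·Ẽ_{k+m-j-l}·B_l, where C(n,j) denotes the binomial coefficient (equal to 0 when j > n). -/

import Mathlib

/-!
Let `L_B` be the linear functional on `ℝ[X]` with `L_B (X ^ n) = B n`, and let
`S n = ∑ l, C(n,l) Ẽ_(n-l) B l` be the moments of the q-Euler polynomials.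
The recurrence for `Ẽ` says `q L_Ẽ (p (X + 1)) + L_Ẽ p = [2]_q p(0)` for every polynomial `p`;
applying it in the first variable of `p (X + Y)` gives
`q L_S (p (X + 1)) + L_S p = [2]_q L_B p`. The theorem is the case `p = X ^ k (X - 1) ^ m`,
whose shift is `(X + 1) ^ k X ^ m`.
-/

open Finset Polynomial

variable {R : Type*} [CommRing R]

theorem Finset.sum_range_choose_mul_of_le (f : ℕ → R) {n N : ℕ} (h : n ≤ N) :
    ∑ j ∈ range (N + 1), (n.choose j : R) * f j = ∑ j ∈ range (n + 1), (n.choose j : R) * f j := by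
  refine (sum_subset (range_subset_range.2 (by omega)) fun j _ hj => ?_).symm
  rw [Nat.choose_eq_zero_of_lt (by simpa using hj), Nat.cast_zero, zero_mul]

def binomConv (E B : ℕ → R) (n : ℕ) : R :=
  ∑ l ∈ range (n + 1), (n.choose l : R) * E (n - l) * B l

namespace Polynomial

def moment (a : ℕ → R) : R[X] →ₗ[R] R :=
  lsum fun n => LinearMap.mulRight R (a n)

@[simp]
theorem moment_monomial (a : ℕ → R) (n : ℕ) (c : R) : moment a (monomial n c) = c * a n :=
  sum_monomial_index c _ (zero_mul _)

@[simp]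
theorem moment_C (a : ℕ → R) (c : R) : moment a (C c) = c * a 0 := by
  rw [← monomial_zero_left, moment_monomial]

@[simp]
theorem moment_C_mul_X_pow (a : ℕ → R) (n : ℕ) (c : R) : moment a (C c * X ^ n) = c * a n := by
  rw [C_mul_X_pow_eq_monomial, moment_monomial]

theorem moment_C_mul (a : ℕ → R) (c : R) (p : R[X]) : moment a (C c * p) = c * moment a p := by
  rw [← smul_eq_C_mul, map_smul, smul_eq_mul]

theorem moment_X_pow_mul_X_add_C_pow (a : ℕ → R) (c : R) (k m : ℕ) :
    moment a (X ^ k * (X + C c) ^ m)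
      = ∑ l ∈ range (m + 1), (m.choose l : R) * c ^ (m - l) * a (l + k) := by
  rw [add_pow, mul_sum, map_sum]
  refine sum_congr rfl fun l _ => ?_
  rw [show X ^ k * (X ^ l * C c ^ (m - l) * (m.choose l : R[X]))
      = C ((m.choose l : R) * c ^ (m - l)) * X ^ (l + k) by
        simp only [map_mul, map_pow, map_natCast]; ring,
    moment_C_mul_X_pow]

theorem moment_X_pow_mul_C_add_X_pow (a : ℕ → R) (c : R) (k m : ℕ) :
    moment a (X ^ k * (C c + X) ^ m)
      = ∑ j ∈ range (m + 1), (m.choose j : R) * c ^ j * a (k + m - j) := by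
  rw [add_pow, mul_sum, map_sum]
  refine sum_congr rfl fun j hj => ?_
  rw [show k + m - j = k + (m - j) by have := mem_range.1 hj; omega,
    show X ^ k * (C c ^ j * X ^ (m - j) * (m.choose j : R[X]))
      = C ((m.choose j : R) * c ^ j) * X ^ (k + (m - j)) by
        simp only [map_mul, map_pow, map_natCast]; ring,
    moment_C_mul_X_pow]

theorem moment_taylor_one_of_qEuler {q : R} {E : ℕ → R} (hE0 : E 0 = 1)
    (hE : ∀ n : ℕ, 1 ≤ n → q * ∑ j ∈ range (n + 1), (n.choose j : R) * E j + E n = 0)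
    (p : R[X]) :
    q * moment E (taylor 1 p) + moment E p = (1 + q) * p.eval 0 := by
  induction p using Polynomial.induction_on' with
  | add p p' hp hp' => simp only [map_add, eval_add]; linear_combination hp + hp'
  | monomial n c =>
    rcases Nat.eq_zero_or_pos n with rfl | hn
    · simp [hE0]; ring
    · have hshift : moment E ((X + C 1) ^ n) = ∑ j ∈ range (n + 1), (n.choose j : R) * E j := by
        simpa using moment_X_pow_mul_X_add_C_pow E 1 0 n
      rw [taylor_monomial, moment_C_mul, hshift, moment_monomial, eval_monomial, zero_pow hn.ne']
      linear_combination c * hE n hn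

/- In `R[X][X]`, `C X` is the variable integrated against `B` and `X` the one integrated
against `E`, so `(C X + X) ^ n` is the umbral form of `binomConv E B n`. -/
theorem moment_binomConv (E B : ℕ → R) (p : R[X]) :
    moment (binomConv E B) p
      = moment B (moment (fun n => C (E n)) ((p.map C).comp (C X + X))) := by
  induction p using Polynomial.induction_on' with
  | add p p' hp hp' => simp only [map_add, Polynomial.map_add, add_comp, hp, hp']
  | monomial n c =>
    rw [Polynomial.map_monomial, monomial_comp, moment_C_mul, moment_C_mul, moment_monomial,
      add_pow, map_sum, map_sum, binomConv]
    refine congrArg (c * ·) (sum_congr rfl fun l _ => ?_)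
    rw [show (C X : R[X][X]) ^ l * X ^ (n - l) * (n.choose l : R[X][X])
        = C (C (n.choose l : R) * X ^ l) * X ^ (n - l) by
          simp only [map_mul, map_pow, map_natCast]; ring,
      moment_C_mul_X_pow, mul_right_comm (C _), ← C_mul, moment_C_mul_X_pow]

theorem moment_binomConv_taylor_one {q : R} {E : ℕ → R} (hE0 : E 0 = 1)
    (hE : ∀ n : ℕ, 1 ≤ n → q * ∑ j ∈ range (n + 1), (n.choose j : R) * E j + E n = 0)
    (B : ℕ → R) (p : R[X]) :
    q * moment (binomConv E B) (taylor 1 p) + moment (binomConv E B) p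
      = (1 + q) * moment B p := by
  set P : R[X][X] := (p.map C).comp (C X + X)
  have hP : ((taylor 1 p).map C).comp (C X + X) = taylor 1 P := by
    simp [P, taylor_apply, map_comp, comp_assoc, add_assoc]
  have hP0 : P.eval 0 = p := by simp [P, eval_map]
  have hCE := moment_taylor_one_of_qEuler (q := C q) (E := fun n => C (E n)) (by simp [hE0])
    (fun n hn => by simpa using congrArg C (hE n hn)) P
  calc q * moment (binomConv E B) (taylor 1 p) + moment (binomConv E B) p
      = moment B (C q * moment (fun n => C (E n)) (taylor 1 P)
          + moment (fun n => C (E n)) P) := by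
        rw [moment_binomConv, moment_binomConv, hP, map_add, moment_C_mul]
    _ = moment B (C (1 + q) * p) := by rw [hCE, hP0, C_add, C_1]
    _ = (1 + q) * moment B p := moment_C_mul B _ p

end Polynomial

theorem stmt_11_general (q : ℝ)
    (E : ℕ → ℝ) (hE0 : E 0 = 1)
    (hE : ∀ n : ℕ, 1 ≤ n →
      q * ∑ j ∈ range (n + 1), (n.choose j : ℝ) * E j + E n = 0)
    (B : ℕ → ℝ)
    (k m : ℕ) :
    (1 + q) * ∑ l ∈ range (m + 1), (m.choose l : ℝ) * (-1 : ℝ) ^ (m - l) * B (l + k)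
    = ∑ j ∈ range (max k m + 1),
        (q * (k.choose j : ℝ) + (-1 : ℝ) ^ j * (m.choose j : ℝ)) *
          ∑ l ∈ range (k + m - j + 1),
            ((k + m - j).choose l : ℝ) * E (k + m - j - l) * B l := by
  change _ = ∑ j ∈ range (max k m + 1),
    (q * (k.choose j : ℝ) + (-1) ^ j * (m.choose j : ℝ)) * binomConv E B (k + m - j)
  have key := moment_binomConv_taylor_one hE0 hE B (X ^ k * (C (-1) + X) ^ m)
  have hshift : taylor (1 : ℝ) (X ^ k * (C (-1) + X) ^ m) = X ^ m * (C 1 + X) ^ k := by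
    simp [taylor_mul, taylor_pow]; ring
  rw [hshift, moment_X_pow_mul_C_add_X_pow, moment_X_pow_mul_C_add_X_pow, add_comm (C _) X,
    moment_X_pow_mul_X_add_C_pow] at key
  rw [← key]
  simp only [one_pow, mul_one, mul_assoc]
  rw [← sum_range_choose_mul_of_le _ (le_max_left k m),
    ← sum_range_choose_mul_of_le _ (le_max_right k m), mul_sum, ← sum_add_distrib]
  refine sum_congr rfl fun j _ => ?_
  rw [add_comm m k]
  ring

theorem stmt_11 (q : ℝ) (hq0 : q ≠ 0) (hq1 : q ≠ -1)
    (E : ℕ → ℝ) (hE0 : E 0 = 1)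
    (hE : ∀ n : ℕ, 1 ≤ n →
      q * ∑ j ∈ range (n + 1), (n.choose j : ℝ) * E j + E n = 0)
    (B : ℕ → ℝ)
    (k m : ℕ) (hk : 1 ≤ k) (hm : 1 ≤ m) :
    (1 + q) * ∑ l ∈ range (m + 1), (m.choose l : ℝ) * (-1 : ℝ) ^ (m - l) * B (l + k)
    = ∑ j ∈ range (max k m + 1),
        (q * (k.choose j : ℝ) + (-1 : ℝ) ^ j * (m.choose j : ℝ)) *
          ∑ l ∈ range (k + m - j + 1),
            ((k + m - j).choose l : ℝ) * E (k + m - j - l) * B l :=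
  stmt_11_general q E hE0 hE B k m
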